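/- arXiv:2102.03287 — 2 statements merged into one kernel-verified Lean document; each statement's English description precedes it below -/
import Mathlib

section
/- Let A, B be σ-algebras on Polish spaces X, Y respectively, let I be a σ-ideal on X and J a σ-ideal on Y, and let C = A⊗B be the σ-algebra on X×Y generated by the rectangles A×B with A ∈ A, B ∈ B. If the pair (C, I⊗J) has the Tall Rectangle Hull Property or the Wide Rectangle Hull Property, then it has the positive rectangle property: for every C ∈ C with C ∉ I⊗J there exist sets A ∈ A, B ∈ B with A×B ∉ I⊗J and K ∈ I⊗J such that A×B ⊆ C ∪ K. -/
open MeasureTheory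

/-- `I` is a σ-ideal: closed under subsets and countable unions. -/
def IsSigmaIdeal {X : Type*} (I : Set (Set X)) : Prop :=
  (∀ A ∈ I, ∀ B : Set X, B ⊆ A → B ∈ I) ∧
  (∀ f : ℕ → Set X, (∀ n, f n ∈ I) → (⋃ n, f n) ∈ I)

/-- The Fubini product of σ-ideals, relative to the product σ-algebra `mA ⊗ mB`. -/
def FubiniProd {X Y : Type*} (mA : MeasurableSpace X) (mB : MeasurableSpace Y)
    (I : Set (Set X)) (J : Set (Set Y)) : Set (Set (X × Y)) :=
  {K | ∃ C : Set (X × Y), MeasurableSet[mA.prod mB] C ∧ K ⊆ C ∧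
    {x : X | {y : Y | (x, y) ∈ C} ∉ J} ∈ I}

/-- The Tall Rectangle Hull Property. -/
def TRHP {X Y : Type*} (mA : MeasurableSpace X) (mB : MeasurableSpace Y)
    (I : Set (Set X)) (J : Set (Set Y)) : Prop :=
  ∀ C : Set (X × Y), MeasurableSet[mA.prod mB] C →
    ∃ Ct : Set X, ∃ I₀ ∈ I, ∃ J₀ ∈ J, MeasurableSet[mA] Ct ∧
      (Ct \ I₀) ×ˢ ((Set.univ : Set Y) \ J₀) ⊆ C ∧
      C ⊆ (Ct ×ˢ (Set.univ : Set Y)) ∪ (I₀ ×ˢ (Set.univ : Set Y)) ∪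
        ((Set.univ : Set X) ×ˢ J₀)

/-- The Wide Rectangle Hull Property. -/
def WRHP {X Y : Type*} (mA : MeasurableSpace X) (mB : MeasurableSpace Y)
    (I : Set (Set X)) (J : Set (Set Y)) : Prop :=
  ∀ C : Set (X × Y), MeasurableSet[mA.prod mB] C →
    ∃ Ct : Set Y, ∃ I₀ ∈ I, ∃ J₀ ∈ J, MeasurableSet[mB] Ct ∧
      ((Set.univ : Set X) \ I₀) ×ˢ (Ct \ J₀) ⊆ C ∧
      C ⊆ ((Set.univ : Set X) ×ˢ Ct) ∪ (I₀ ×ˢ (Set.univ : Set Y)) ∪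
        ((Set.univ : Set X) ×ˢ J₀)

lemma sigmaIdeal_union {Z : Type*} {L : Set (Set Z)} (hL : IsSigmaIdeal L)
    {A B : Set Z} (hA : A ∈ L) (hB : B ∈ L) : A ∪ B ∈ L := by
  have h : (⋃ n : ℕ, if n = 0 then A else B) = A ∪ B := by
    ext z; simp only [Set.mem_iUnion, Set.mem_union]
    constructor
    · rintro ⟨n, hn⟩; by_cases h0 : n = 0 <;> simp [h0] at hn <;> tauto
    · rintro (hz | hz)
      · exact ⟨0, by simp [hz]⟩
      · exact ⟨1, by simp [hz]⟩
  rw [← h]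
  exact hL.2 _ fun n => by by_cases h0 : n = 0 <;> simp [h0, hA, hB]

/-- TRHP or WRHP implies the positive rectangle property. -/
theorem prp_of_trhp_or_wrhp
    {X Y : Type*} [TopologicalSpace X] [PolishSpace X] [TopologicalSpace Y] [PolishSpace Y]
    (mA : MeasurableSpace X) (mB : MeasurableSpace Y)
    (I : Set (Set X)) (J : Set (Set Y))
    (hI : IsSigmaIdeal I) (hJ : IsSigmaIdeal J)
    (h : TRHP mA mB I J ∨ WRHP mA mB I J) :
    ∀ C : Set (X × Y), MeasurableSet[mA.prod mB] C → C ∉ FubiniProd mA mB I J →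
      ∃ A : Set X, ∃ B : Set Y, MeasurableSet[mA] A ∧ MeasurableSet[mB] B ∧
        (A ×ˢ B) ∉ FubiniProd mA mB I J ∧
        ∃ K ∈ FubiniProd mA mB I J, A ×ˢ B ⊆ C ∪ K := by
  intro C hC hCnot
  rcases h with htall | hwide
  · -- TRHP case
    obtain ⟨Ct, I₀, hI₀, J₀, hJ₀, hCtm, hlow, hhigh⟩ := htall C hC
    refine ⟨Ct, Set.univ, hCtm, MeasurableSet.univ, ?_, (Ct ×ˢ (Set.univ : Set Y)) \ C, ?_, ?_⟩
    · -- Ct ×ˢ univ ∉ FubiniProd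
      rintro ⟨D, hDm, hDsub, hDsmall⟩
      by_cases huniv : (Set.univ : Set Y) ∈ J
      · exact hCnot ⟨C, hC, subset_rfl,
          hI.1 _ hI₀ _ (fun x hx => absurd (hJ.1 _ huniv _ (Set.subset_univ _)) hx)⟩
      · -- univ ∉ J, so Ct ∈ I
        have hCtI : Ct ∈ I := by
          refine hI.1 _ hDsmall _ ?_
          intro x hx
          have : {y : Y | (x, y) ∈ D} = Set.univ := by
            apply Set.eq_univ_of_univ_subset
            intro y _
            exact hDsub (Set.mk_mem_prod hx (Set.mem_univ y))
          simpa [this] using huniv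
        apply hCnot
        refine ⟨C, hC, subset_rfl, hI.1 _ (sigmaIdeal_union hI hCtI hI₀) _ ?_⟩
        intro x hx
        simp only [Set.mem_setOf_eq] at hx
        by_contra hmem
        apply hx
        apply hJ.1 _ hJ₀
        intro y hy
        have := hhigh hy
        simp only [Set.mem_union, Set.mem_prod, Set.mem_univ, and_true, true_and] at this
        rcases this with (h1 | h1) | h1
        · exact absurd (Or.inl h1) hmem
        · exact absurd (Or.inr h1) hmem
        · exact h1
    · -- K ∈ FubiniProd
      refine ⟨(Ct ×ˢ (Set.univ : Set Y)) \ C, (hCtm.prod MeasurableSet.univ).diff hC,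
        subset_rfl, hI.1 _ hI₀ _ ?_⟩
      intro x hx
      simp only [Set.mem_setOf_eq] at hx
      by_contra hxI₀
      apply hx
      apply hJ.1 _ hJ₀
      intro y hy
      simp only [Set.mem_setOf_eq, Set.mem_diff, Set.mem_prod, Set.mem_univ, and_true] at hy
      obtain ⟨hxCt, hyC⟩ := hy
      by_contra hyJ₀
      exact hyC (hlow (Set.mk_mem_prod ⟨hxCt, hxI₀⟩ ⟨Set.mem_univ y, hyJ₀⟩))
    · -- A ×ˢ B ⊆ C ∪ K
      rintro ⟨x, y⟩ hxy
      by_cases hc : (x, y) ∈ C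
      · exact Or.inl hc
      · exact Or.inr ⟨hxy, hc⟩
  · -- WRHP case
    obtain ⟨Ct, I₀, hI₀, J₀, hJ₀, hCtm, hlow, hhigh⟩ := hwide C hC
    refine ⟨Set.univ, Ct, MeasurableSet.univ, hCtm, ?_,
      ((Set.univ : Set X) ×ˢ Ct) \ C, ?_, ?_⟩
    · -- univ ×ˢ Ct ∉ FubiniProd
      rintro ⟨D, hDm, hDsub, hDsmall⟩
      by_cases hunivI : (Set.univ : Set X) ∈ I
      · exact hCnot ⟨C, hC, subset_rfl, hI.1 _ hunivI _ (Set.subset_univ _)⟩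
      · -- some x ∉ {x : D_x ∉ J}, so Ct ∈ J
        have hne : {x : X | {y : Y | (x, y) ∈ D} ∉ J} ≠ Set.univ := by
          intro heq; exact hunivI (heq ▸ hDsmall)
        obtain ⟨x₀, hx₀⟩ : ∃ x : X, x ∉ {x : X | {y : Y | (x, y) ∈ D} ∉ J} := by
          by_contra hcon
          push_neg at hcon
          exact hne (Set.eq_univ_of_forall hcon)
        simp only [Set.mem_setOf_eq, not_not] at hx₀
        have hCtJ : Ct ∈ J := hJ.1 _ hx₀ _ (fun y hy =>
          hDsub (Set.mk_mem_prod (Set.mem_univ x₀) hy))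
        apply hCnot
        refine ⟨C, hC, subset_rfl, hI.1 _ hI₀ _ ?_⟩
        intro x hx
        simp only [Set.mem_setOf_eq] at hx
        by_contra hxI₀
        apply hx
        apply hJ.1 _ (sigmaIdeal_union hJ hCtJ hJ₀)
        intro y hy
        have := hhigh hy
        simp only [Set.mem_union, Set.mem_prod, Set.mem_univ, and_true, true_and] at this
        rcases this with (h1 | h1) | h1
        · exact Or.inl h1
        · exact absurd h1 hxI₀
        · exact Or.inr h1
    · -- K ∈ FubiniProd
      refine ⟨((Set.univ : Set X) ×ˢ Ct) \ C, (MeasurableSet.univ.prod hCtm).diff hC,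
        subset_rfl, hI.1 _ hI₀ _ ?_⟩
      intro x hx
      simp only [Set.mem_setOf_eq] at hx
      by_contra hxI₀
      apply hx
      apply hJ.1 _ hJ₀
      intro y hy
      simp only [Set.mem_setOf_eq, Set.mem_diff, Set.mem_prod, Set.mem_univ, true_and] at hy
      obtain ⟨hyCt, hyC⟩ := hy
      by_contra hyJ₀
      exact hyC (hlow (Set.mk_mem_prod ⟨Set.mem_univ x, hxI₀⟩ ⟨hyCt, hyJ₀⟩))
    · rintro ⟨x, y⟩ hxy
      by_cases hc : (x, y) ∈ C
      · exact Or.inl hc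
      · exact Or.inr ⟨hxy, hc⟩
end

section
/- Let A be a σ-algebra on X, let I be a σ-ideal on X and J a σ-ideal on Y. Say that a set C ⊆ X×Y has TRHP if there exist C̃ ∈ A, I₀ ∈ I, J₀ ∈ J with (C̃\I₀)×(Y\J₀) ⊆ C ⊆ (C̃×Y) ∪ (I₀×Y) ∪ (X×J₀). Then the family of subsets of X×Y having TRHP is closed under countable unions and under complements: if each C_n (n ∈ ω) has TRHP then ⋃_{n∈ω} C_n has TRHP, and if D has TRHP then (X×Y)\D has TRHP. -/
open MeasureTheory

/-- A single set `C ⊆ X × Y` has TRHP (relative to the σ-algebra `mA` on `X` and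
σ-ideals `I` on `X` and `J` on `Y`). -/
def HasTRHP {X Y : Type*} (mA : MeasurableSpace X)
    (I : Set (Set X)) (J : Set (Set Y)) (C : Set (X × Y)) : Prop :=
  ∃ Ct : Set X, ∃ I₀ ∈ I, ∃ J₀ ∈ J, MeasurableSet[mA] Ct ∧
    (Ct \ I₀) ×ˢ ((Set.univ : Set Y) \ J₀) ⊆ C ∧
    C ⊆ (Ct ×ˢ (Set.univ : Set Y)) ∪ (I₀ ×ˢ (Set.univ : Set Y)) ∪
      ((Set.univ : Set X) ×ˢ J₀)

/-- the family of sets with TRHP is closed under countable unions and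
complements. -/
theorem trhp_closed_under_countable_unions_and_complements
    {X Y : Type*} (mA : MeasurableSpace X)
    (I : Set (Set X)) (J : Set (Set Y))
    (hI : IsSigmaIdeal I) (hJ : IsSigmaIdeal J) :
    (∀ C : ℕ → Set (X × Y), (∀ n, HasTRHP mA I J (C n)) →
      HasTRHP mA I J (⋃ n, C n)) ∧
    (∀ D : Set (X × Y), HasTRHP mA I J D → HasTRHP mA I J Dᶜ) := by
  constructor
  · intro C hC
    choose Ct I₀ hI₀ J₀ hJ₀ hm hlo hhi using hC
    refine ⟨⋃ n, Ct n, ⋃ n, I₀ n, hI.2 _ hI₀, ⋃ n, J₀ n, hJ.2 _ hJ₀,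
      MeasurableSet.iUnion hm, ?_, ?_⟩
    · rintro ⟨x, y⟩ ⟨⟨hx, hxI⟩, -, hyJ⟩
      simp only [Set.mem_iUnion] at hx hxI hyJ ⊢
      obtain ⟨n, hn⟩ := hx
      exact ⟨n, hlo n ⟨⟨hn, fun h => hxI ⟨n, h⟩⟩, Set.mem_univ _,
        fun h => hyJ ⟨n, h⟩⟩⟩
    · rintro ⟨x, y⟩ hxy
      simp only [Set.mem_iUnion] at hxy
      obtain ⟨n, hn⟩ := hxy
      rcases hhi n hn with (⟨hx, -⟩ | ⟨hx, -⟩) | ⟨-, hy⟩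
      · exact Or.inl (Or.inl ⟨Set.mem_iUnion.2 ⟨n, hx⟩, Set.mem_univ _⟩)
      · exact Or.inl (Or.inr ⟨Set.mem_iUnion.2 ⟨n, hx⟩, Set.mem_univ _⟩)
      · exact Or.inr ⟨Set.mem_univ _, Set.mem_iUnion.2 ⟨n, hy⟩⟩
  · rintro D ⟨Ct, I₀, hI₀, J₀, hJ₀, hm, hlo, hhi⟩
    refine ⟨Ctᶜ, I₀, hI₀, J₀, hJ₀, hm.compl, ?_, ?_⟩
    · rintro ⟨x, y⟩ ⟨⟨hx, hxI⟩, -, hyJ⟩ hD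
      rcases hhi hD with (⟨h, -⟩ | ⟨h, -⟩) | ⟨-, h⟩
      · exact hx h
      · exact hxI h
      · exact hyJ h
    · rintro ⟨x, y⟩ hD
      by_cases hx : x ∈ Ct
      · by_cases hxI : x ∈ I₀
        · exact Or.inl (Or.inr ⟨hxI, Set.mem_univ _⟩)
        · by_cases hyJ : y ∈ J₀
          · exact Or.inr ⟨Set.mem_univ _, hyJ⟩
          · exact absurd (hlo ⟨⟨hx, hxI⟩, Set.mem_univ _, hyJ⟩) hD
      · exact Or.inl (Or.inl ⟨hx, Set.mem_univ _⟩)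
end
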